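/- Let L > 0 and let γ : ℝ → ℝ² be a C³, L-periodic, unit-speed curve with unit normal n(s) = J(γ'(s)) where J(a,b) = (−b,a), and signed curvature κ(s) = ⟨γ''(s), n(s)⟩. Assume κ(s) + ⟨γ(s), n(s)⟩ = 0 for all s, and that ∫₀^L κ(s) ds = 2π. Then κ(s) > 0 for all s ∈ ℝ, i.e. the curve is strictly convex. -/

import Mathlib

open Real
open scoped InnerProductSpace

/-- Rotation by `π/2` in the Euclidean plane: `J(a, b) = (-b, a)`. -/
noncomputable def Jrot (v : EuclideanSpace ℝ (Fin 2)) : EuclideanSpace ℝ (Fin 2) :=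
  WithLp.toLp 2 ![-(v 1), v 0]

/-!
Writing `T = γ'`, the self-similarity equation reads `κ = ⟨Jγ, T⟩`. Since `T' = κ J T` for a
unit-speed curve, differentiating gives the linear ODE `κ' = ⟨γ, T⟩ κ`, so
`κ(s) = κ(0) exp ∫₀ˢ ⟨γ, T⟩` never changes sign. It is positive because `∫₀ᴸ κ = 2π > 0`.
-/

local notation "ℝ²" => EuclideanSpace ℝ (Fin 2)

@[simp]
theorem Jrot_apply_zero (v : ℝ²) : Jrot v 0 = -v 1 := rfl

@[simp]
theorem Jrot_apply_one (v : ℝ²) : Jrot v 1 = v 0 := rfl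

theorem inner_Jrot_self (v : ℝ²) : ⟪Jrot v, v⟫_ℝ = 0 := by
  simp only [PiLp.inner_apply, Fin.sum_univ_two, RCLike.inner_apply, conj_trivial,
    Jrot_apply_zero, Jrot_apply_one]
  ring

theorem inner_Jrot_Jrot (u v : ℝ²) : ⟪Jrot u, Jrot v⟫_ℝ = ⟪u, v⟫_ℝ := by
  simp only [PiLp.inner_apply, Fin.sum_univ_two, RCLike.inner_apply, conj_trivial,
    Jrot_apply_zero, Jrot_apply_one]
  ring

theorem inner_Jrot_left (u v : ℝ²) : ⟪Jrot u, v⟫_ℝ = -⟪u, Jrot v⟫_ℝ := by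
  simp only [PiLp.inner_apply, Fin.sum_univ_two, RCLike.inner_apply, conj_trivial,
    Jrot_apply_zero, Jrot_apply_one]
  ring

theorem eq_inner_Jrot_smul_Jrot_of_inner_eq_zero {T A : ℝ²} (hT : ‖T‖ = 1)
    (hA : ⟪T, A⟫_ℝ = 0) : A = ⟪A, Jrot T⟫_ℝ • Jrot T := by
  have hT2 : T 0 ^ 2 + T 1 ^ 2 = 1 := by
    rw [← Fin.sum_univ_two (fun i => T i ^ 2), ← EuclideanSpace.real_norm_sq_eq, hT, one_pow]
  simp only [PiLp.inner_apply, Fin.sum_univ_two, RCLike.inner_apply, conj_trivial] at hA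
  ext i
  fin_cases i <;>
    simp only [PiLp.inner_apply, Fin.sum_univ_two, RCLike.inner_apply, conj_trivial,
      Jrot_apply_zero, Jrot_apply_one, PiLp.smul_apply, smul_eq_mul, Fin.zero_eta, Fin.mk_one]
  · linear_combination (-A 0) * hT2 + T 0 * hA
  · linear_combination (-A 1) * hT2 + T 1 * hA

noncomputable def JrotLinear : ℝ² →ₗ[ℝ] ℝ² where
  toFun := Jrot
  map_add' u v := by ext i; fin_cases i <;> simp [add_comm]
  map_smul' c v := by ext i; fin_cases i <;> simp

theorem HasDerivAt.Jrot {f : ℝ → ℝ²} {f' : ℝ²} {x : ℝ} (hf : HasDerivAt f f' x) :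
    HasDerivAt (fun t => Jrot (f t)) (Jrot f') x :=
  (LinearMap.toContinuousLinearMap JrotLinear).hasFDerivAt.comp_hasDerivAt x hf

theorem inner_eq_zero_of_hasDerivAt_of_norm_eq_one {F : Type*} [NormedAddCommGroup F]
    [InnerProductSpace ℝ F] {T : ℝ → F} {A : F} {s : ℝ}
    (hT : ∀ t, ‖T t‖ = 1) (hA : HasDerivAt T A s) : ⟪T s, A⟫_ℝ = 0 := by
  have hconst : (‖T ·‖ ^ 2) = fun _ => (1 : ℝ) := funext fun t => by rw [hT t, one_pow]
  have h := hA.norm_sq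
  rw [hconst] at h
  linarith [h.unique (hasDerivAt_const s 1)]

theorem eq_mul_exp_integral_of_hasDerivAt_eq_mul {κ f : ℝ → ℝ} (hf : Continuous f)
    (hκ : ∀ s, HasDerivAt κ (κ s * f s) s) (a s : ℝ) :
    κ s = κ a * exp (∫ t in a..s, f t) := by
  set F : ℝ → ℝ := fun u => ∫ t in a..u, f t
  have hF : ∀ u, HasDerivAt F (f u) u := fun u => (hf.integral_hasStrictDerivAt a u).hasDerivAt
  have hconst : ∀ u, HasDerivAt (fun t => κ t * exp (-F t)) 0 u := fun u =>
    ((hκ u).mul (hF u).neg.exp).congr_deriv (by ring)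
  have h := is_const_of_deriv_eq_zero (fun u => (hconst u).differentiableAt)
    (fun u => (hconst u).deriv) s a
  simp only [F, intervalIntegral.integral_same, neg_zero, exp_zero, mul_one] at h
  rw [← h, mul_assoc, ← exp_add, neg_add_cancel, exp_zero, mul_one]

theorem hasDerivAt_curvature_of_selfSimilar {γ : ℝ → ℝ²} (hγ : ContDiff ℝ 2 γ)
    (hunit : ∀ s, ‖deriv γ s‖ = 1) {κ : ℝ → ℝ}
    (hκ : ∀ s, κ s = ⟪deriv (deriv γ) s, Jrot (deriv γ s)⟫_ℝ)
    (heq : ∀ s, κ s + ⟪γ s, Jrot (deriv γ s)⟫_ℝ = 0) (s : ℝ) :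
    HasDerivAt κ (κ s * ⟪γ s, deriv γ s⟫_ℝ) s := by
  have hγ' : HasDerivAt γ (deriv γ s) s :=
    (hγ.differentiable (by norm_num) s).hasDerivAt
  have hT' : HasDerivAt (deriv γ) (deriv (deriv γ) s) s :=
    ((contDiff_succ_iff_deriv.mp hγ).2.2.differentiable one_ne_zero s).hasDerivAt
  have hκ_eq : ∀ t, κ t = ⟪Jrot (γ t), deriv γ t⟫_ℝ := fun t => by
    rw [inner_Jrot_left]
    linarith [heq t]
  have hT'_eq : deriv (deriv γ) s = κ s • Jrot (deriv γ s) := by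
    rw [hκ s]
    exact eq_inner_Jrot_smul_Jrot_of_inner_eq_zero (hunit s)
      (inner_eq_zero_of_hasDerivAt_of_norm_eq_one hunit hT')
  have h := hγ'.Jrot.inner ℝ hT'
  rw [hT'_eq, inner_smul_right, inner_Jrot_Jrot, inner_Jrot_self, add_zero] at h
  exact h.congr_of_eventuallyEq (Filter.Eventually.of_forall hκ_eq)

theorem contracting_self_similar_strictly_convex_general
    (L : ℝ) (hL : 0 < L)
    (γ : ℝ → EuclideanSpace ℝ (Fin 2))
    (hγ : ContDiff ℝ 3 γ)
    (hunit : ∀ s : ℝ, ‖deriv γ s‖ = 1)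
    (n : ℝ → EuclideanSpace ℝ (Fin 2))
    (hn : ∀ s : ℝ, n s = Jrot (deriv γ s))
    (κ : ℝ → ℝ)
    (hκ : ∀ s : ℝ, κ s = ⟪deriv (deriv γ) s, n s⟫_ℝ)
    (heq : ∀ s : ℝ, κ s + ⟪γ s, n s⟫_ℝ = 0)
    (hindex : ∫ s in (0:ℝ)..L, κ s = 2 * π) :
    ∀ s : ℝ, 0 < κ s := by
  obtain rfl : n = fun s => Jrot (deriv γ s) := funext hn
  have hγ2 : ContDiff ℝ 2 γ := hγ.of_le (by norm_num)
  have hsol := eq_mul_exp_integral_of_hasDerivAt_eq_mul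
    (hγ2.continuous.inner (hγ2.continuous_deriv (by norm_num)))
    (hasDerivAt_curvature_of_selfSimilar hγ2 hunit hκ heq) 0
  have hκ0 : 0 < κ 0 := by
    by_contra! hκ0
    have hnonpos : ∫ s in (0:ℝ)..L, κ s ≤ 0 := by
      rw [← neg_nonneg, ← intervalIntegral.integral_neg]
      refine intervalIntegral.integral_nonneg_of_forall hL.le fun s => ?_
      rw [hsol s, neg_nonneg]
      exact mul_nonpos_of_nonpos_of_nonneg hκ0 (exp_pos _).le
    linarith [pi_pos]
  intro s
  rw [hsol s]
  positivity

/-- A closed unit-speed plane curve of rotation index `+1` satisfying the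
contracting self-similar equation `κ + ⟨γ, n⟩ = 0` is strictly convex: `κ > 0`. -/
theorem contracting_self_similar_strictly_convex
    (L : ℝ) (hL : 0 < L)
    (γ : ℝ → EuclideanSpace ℝ (Fin 2))
    (hγ : ContDiff ℝ 3 γ)
    (hper : ∀ s : ℝ, γ (s + L) = γ s)
    (hunit : ∀ s : ℝ, ‖deriv γ s‖ = 1)
    (n : ℝ → EuclideanSpace ℝ (Fin 2))
    (hn : ∀ s : ℝ, n s = Jrot (deriv γ s))
    (κ : ℝ → ℝ)
    (hκ : ∀ s : ℝ, κ s = ⟪deriv (deriv γ) s, n s⟫_ℝ)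
    (heq : ∀ s : ℝ, κ s + ⟪γ s, n s⟫_ℝ = 0)
    (hindex : ∫ s in (0:ℝ)..L, κ s = 2 * π) :
    ∀ s : ℝ, 0 < κ s :=
  contracting_self_similar_strictly_convex_general L hL γ hγ hunit n hn κ hκ heq hindex
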